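/- Let A2 be a stable matrix (spectral radius < 1), A1 anti-stable, and suppose T solves T·A1 − A2·T = A3 and D1 + D2·T = 0. Then for all initial conditions, the output z(t) = D1·x1(t) + D2·x2(t) of the system x1(t+1) = A1·x1(t), x2(t+1) = A2·x2(t) + A3·x1(t) converges to 0 as t → ∞. -/

import Mathlib

open Matrix Filter

def IsStable {n : Type*} [Fintype n] [DecidableEq n] (M : Matrix n n ℝ) : Prop :=
  ∀ μ ∈ spectrum ℂ (M.map (algebraMap ℝ ℂ)), ‖μ‖ < 1

def IsAntiStable {n : Type*} [Fintype n] [DecidableEq n] (M : Matrix n n ℝ) : Prop :=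
  ∀ μ ∈ spectrum ℂ (M.map (algebraMap ℝ ℂ)), 1 ≤ ‖μ‖

/-! The Sylvester equation `T A₁ - A₂ T = A₃` makes `e = x₂ - T x₁` evolve autonomously,
`e (t + 1) = A₂ e t`, and `D₁ + D₂ T = 0` turns the output into `D₂ e`. Hence the output is
`D₂ A₂ᵗ e 0`, which tends to zero because, by Gelfand's formula, the powers of a matrix of spectral
radius less than one tend to zero. -/

open scoped Topology

section BanachAlgebra

variable {A : Type*} [NormedRing A] [NormedAlgebra ℂ A] [CompleteSpace A]

theorem spectralRadius_lt_one_of_forall_norm_lt_one {a : A}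
    (h : ∀ μ ∈ spectrum ℂ a, ‖μ‖ < 1) : spectralRadius ℂ a < 1 := by
  rcases (spectrum ℂ a).eq_empty_or_nonempty with hempty | hne
  · simp [spectralRadius, hempty]
  · simpa using spectrum.spectralRadius_lt_of_forall_lt_of_nonempty hne (r := 1)
      fun μ hμ => by simpa [← NNReal.coe_lt_coe] using h μ hμ

theorem tendsto_pow_atTop_nhds_zero_of_spectralRadius_lt_one {a : A}
    (h : spectralRadius ℂ a < 1) : Tendsto (fun n : ℕ => a ^ n) atTop (𝓝 0) := by
  obtain ⟨r, hρr, hr1⟩ := ENNReal.lt_iff_exists_nnreal_btwn.mp h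
  have hbound : ∀ᶠ n : ℕ in atTop, ‖a ^ n‖₊ ≤ r ^ n := by
    have hgelfand := spectrum.pow_nnnorm_pow_one_div_tendsto_nhds_spectralRadius a
    filter_upwards [hgelfand.eventually_lt_const hρr, eventually_ge_atTop 1] with n hn hn1
    have hpos : (0 : ℝ) < n := by exact_mod_cast hn1
    rw [one_div, ENNReal.rpow_inv_lt_iff hpos, ENNReal.rpow_natCast] at hn
    exact_mod_cast hn.le
  refine squeeze_zero_norm' (hbound.mono fun n hn => ?_)
    (tendsto_pow_atTop_nhds_zero_of_lt_one r.coe_nonneg (by exact_mod_cast hr1))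
  exact_mod_cast hn

end BanachAlgebra

theorem IsStable.tendsto_pow_atTop_nhds_zero {n : Type*} [Fintype n] [DecidableEq n]
    {M : Matrix n n ℝ} (hM : IsStable M) : Tendsto (fun t : ℕ => M ^ t) atTop (𝓝 0) := by
  -- any submultiplicative norm will do: its topology is the entrywise one
  let := Matrix.linftyOpNormedRing (n := n) (α := ℂ)
  let := Matrix.linftyOpNormedAlgebra (n := n) (R := ℂ) (α := ℂ)
  have hC : Tendsto (fun t : ℕ => M.map (algebraMap ℝ ℂ) ^ t) atTop (𝓝 0) :=
    tendsto_pow_atTop_nhds_zero_of_spectralRadius_lt_one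
      (spectralRadius_lt_one_of_forall_norm_lt_one hM)
  have hre := ((continuous_id.matrix_map Complex.continuous_re).tendsto 0).comp hC
  have hpow : ∀ t : ℕ, (M.map (algebraMap ℝ ℂ) ^ t).map Complex.re = M ^ t := fun t => by
    rw [← (algebraMap ℝ ℂ).mapMatrix_apply, ← map_pow, RingHom.mapMatrix_apply,
      Matrix.map_map]
    exact Matrix.map_id' _
  simpa only [Function.comp_def, id, hpow, Matrix.map_zero _ Complex.zero_re] using hre

section Sylvester

variable {R m n : Type*} [Ring R] [Fintype m] [Fintype n]

theorem sub_mulVec_succ_of_sylvester {A1 : Matrix m m R} {A2 : Matrix n n R} {A3 : Matrix n m R}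
    {T : Matrix n m R} (hT : T * A1 - A2 * T = A3) {x1 : ℕ → m → R} {x2 : ℕ → n → R}
    (hx1 : ∀ t, x1 (t + 1) = A1 *ᵥ x1 t) (hx2 : ∀ t, x2 (t + 1) = A2 *ᵥ x2 t + A3 *ᵥ x1 t)
    (t : ℕ) : x2 (t + 1) - T *ᵥ x1 (t + 1) = A2 *ᵥ (x2 t - T *ᵥ x1 t) := by
  simp only [hx1, hx2, ← hT, sub_mulVec, mulVec_sub, mulVec_mulVec]
  abel

theorem eq_pow_mulVec_of_forall_succ [DecidableEq n] {A : Matrix n n R} {e : ℕ → n → R}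
    (h : ∀ t, e (t + 1) = A *ᵥ e t) (t : ℕ) : e t = (A ^ t) *ᵥ e 0 := by
  induction t with
  | zero => simp
  | succ t ih => rw [h, ih, mulVec_mulVec, pow_succ']

theorem add_mulVec_eq_mulVec_sub {p : Type*} {D1 : Matrix p m R} {D2 : Matrix p n R}
    {T : Matrix n m R} (hD : D1 + D2 * T = 0) (u : m → R) (v : n → R) :
    D1 *ᵥ u + D2 *ᵥ v = D2 *ᵥ (v - T *ᵥ u) := by
  rw [mulVec_sub, mulVec_mulVec, eq_neg_of_add_eq_zero_right hD, neg_mulVec]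
  abel

end Sylvester

theorem stmt2_general {n1 n2 p : ℕ}
    (A1 : Matrix (Fin n1) (Fin n1) ℝ) (A2 : Matrix (Fin n2) (Fin n2) ℝ)
    (A3 : Matrix (Fin n2) (Fin n1) ℝ)
    (D1 : Matrix (Fin p) (Fin n1) ℝ) (D2 : Matrix (Fin p) (Fin n2) ℝ)
    (T : Matrix (Fin n2) (Fin n1) ℝ)
    (hA2 : IsStable A2)
    (hT : T * A1 - A2 * T = A3) (hD : D1 + D2 * T = 0)
    (x1 : ℕ → Fin n1 → ℝ) (x2 : ℕ → Fin n2 → ℝ)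
    (hx1 : ∀ t, x1 (t + 1) = A1.mulVec (x1 t))
    (hx2 : ∀ t, x2 (t + 1) = A2.mulVec (x2 t) + A3.mulVec (x1 t)) :
    Tendsto (fun t => D1.mulVec (x1 t) + D2.mulVec (x2 t)) atTop (nhds 0) := by
  set e₀ := x2 0 - T *ᵥ x1 0
  have hz : ∀ t, D1 *ᵥ x1 t + D2 *ᵥ x2 t = D2 *ᵥ ((A2 ^ t) *ᵥ e₀) := fun t => by
    rw [add_mulVec_eq_mulVec_sub hD,
      eq_pow_mulVec_of_forall_succ (e := fun t => x2 t - T *ᵥ x1 t)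
        (sub_mulVec_succ_of_sylvester hT hx1 hx2) t]
  have hcont : Continuous fun M : Matrix (Fin n2) (Fin n2) ℝ => D2 *ᵥ (M *ᵥ e₀) :=
    continuous_const.matrix_mulVec (continuous_id.matrix_mulVec continuous_const)
  simpa only [Function.comp_def, hz, zero_mulVec, mulVec_zero] using
    (hcont.tendsto 0).comp hA2.tendsto_pow_atTop_nhds_zero

theorem stmt2 {n1 n2 p : ℕ}
    (A1 : Matrix (Fin n1) (Fin n1) ℝ) (A2 : Matrix (Fin n2) (Fin n2) ℝ)
    (A3 : Matrix (Fin n2) (Fin n1) ℝ)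
    (D1 : Matrix (Fin p) (Fin n1) ℝ) (D2 : Matrix (Fin p) (Fin n2) ℝ)
    (T : Matrix (Fin n2) (Fin n1) ℝ)
    (hA1 : IsAntiStable A1) (hA2 : IsStable A2)
    (hT : T * A1 - A2 * T = A3) (hD : D1 + D2 * T = 0)
    (x1 : ℕ → Fin n1 → ℝ) (x2 : ℕ → Fin n2 → ℝ)
    (hx1 : ∀ t, x1 (t + 1) = A1.mulVec (x1 t))
    (hx2 : ∀ t, x2 (t + 1) = A2.mulVec (x2 t) + A3.mulVec (x1 t)) :
    Tendsto (fun t => D1.mulVec (x1 t) + D2.mulVec (x2 t)) atTop (nhds 0) :=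
  stmt2_general A1 A2 A3 D1 D2 T hA2 hT hD x1 x2 hx1 hx2
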